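/- arXiv:1603.09376 — 3 statements merged into one kernel-verified Lean document; each statement's English description precedes it below -/
import Mathlib

section
/- Let K ≥ 1 be a natural number and let M, N, N_E be nonnegative real numbers with M ≤ N. Suppose d, α, β : Fin K → ℝ are nonnegative families satisfying: (i) (∑ i, d i) + (⨆ i, α i) ≤ N (the secure and largest non-secure signal parts fit in the N receiver dimensions); (ii) d i + α i + β i ≤ M for every i (each transmitter's message occupies at most M dimensions); (iii) ∑ i, (α i + β i) = N_E (the eavesdropper decodes exactly N_E degrees of freedom); (iv) β i ≤ 0 for every i, hence β i = 0 (no part of any message can miss the receiver when M ≤ N). Then ∑ i, d i ≤ min (K • M − N_E) (N − N_E / K). -/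
open Finset

theorem Real.sum_div_card_le_iSup {ι : Type*} [Fintype ι] (f : ι → ℝ) :
    (∑ i, f i) / Fintype.card ι ≤ ⨆ i, f i := by
  rcases isEmpty_or_nonempty ι with hι | hι
  · simp -- both sides are junk `0`: `x / 0 = 0` and `sSup ∅ = 0` in `ℝ`
  have hsum : ∑ i, f i ≤ Fintype.card ι • ⨆ i, f i :=
    sum_le_card_nsmul univ f _ fun i _ => le_ciSup (Set.finite_range f).bddAbove i
  rw [nsmul_eq_mul] at hsum
  exact (div_le_iff₀' (by exact_mod_cast Fintype.card_pos)).2 hsum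

theorem mac_sdof_upper_bound_M_le_N_general
    (K : ℕ) (M N N_E : ℝ)
    (d α β : Fin K → ℝ)
    (h1 : (∑ i, d i) + (⨆ i, α i) ≤ N)
    (h2 : ∀ i, d i + α i + β i ≤ M)
    (h3 : ∑ i, (α i + β i) = N_E)
    (h4 : ∀ i, β i ≤ 0) :
    ∑ i, d i ≤ min (K • M - N_E) (N - N_E / K) := by
  refine le_min ?_ ?_
  · have hsum : ∑ i, (d i + α i + β i) ≤ K • M := by
      simpa using sum_le_sum fun i (_ : i ∈ univ) => h2 i
    simp only [sum_add_distrib] at hsum h3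
    linarith
  · have hNE : N_E ≤ ∑ i, α i := h3 ▸ sum_le_sum fun i _ => by linarith [h4 i]
    have havg : N_E / K ≤ ⨆ i, α i :=
      calc N_E / K ≤ (∑ i, α i) / K := by gcongr
        _ ≤ ⨆ i, α i := by simpa using Real.sum_div_card_le_iSup α
    linarith

/-- Upper-bound LP for the K-user MAC, case `M ≤ N`:
`∑ d ≤ min (K•M − N_E) (N − N_E/K)`. -/
theorem mac_sdof_upper_bound_M_le_N
    (K : ℕ) (hK : 1 ≤ K) (M N N_E : ℝ)
    (hM : 0 ≤ M) (hN : 0 ≤ N) (hNE : 0 ≤ N_E) (hMN : M ≤ N)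
    (d α β : Fin K → ℝ)
    (hd : ∀ i, 0 ≤ d i) (hα : ∀ i, 0 ≤ α i) (hβ : ∀ i, 0 ≤ β i)
    (h1 : (∑ i, d i) + (⨆ i, α i) ≤ N)
    (h2 : ∀ i, d i + α i + β i ≤ M)
    (h3 : ∑ i, (α i + β i) = N_E)
    (h4 : ∀ i, β i ≤ 0) :
    ∑ i, d i ≤ min (K • M - N_E) (N - N_E / K) :=
  mac_sdof_upper_bound_M_le_N_general K M N N_E d α β h1 h2 h3 h4
end

section
/- Let K ≥ 1 be a natural number and let M, N, N_E be nonnegative real numbers with N ≤ M. Suppose d, α, β : Fin K → ℝ are nonnegative families satisfying: (i) (∑ i, d i) + (⨆ i, α i) ≤ N; (ii) ∑ i, (α i + β i) = N_E; (iii) β i ≤ M − N for every i. Then ∑ i, d i ≤ min (M − N_E / K) N, i.e. both ∑ i, d i ≤ M − N_E/K and ∑ i, d i ≤ N hold. -/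
/-!
Each `α i` is at most `⨆ α` and each `β i` at most `M - N`, so summing over the `K` users gives
`N_E ≤ K (⨆ α + M - N)`. Together with `∑ d + ⨆ α ≤ N` and `⨆ α ≥ 0` this yields both
`∑ d ≤ M - N_E / K` and `∑ d ≤ N`.
-/

open Finset

theorem Real.sum_le_card_mul_iSup {ι : Type*} [Fintype ι] (f : ι → ℝ) :
    ∑ i, f i ≤ Fintype.card ι * ⨆ i, f i := by
  simpa using Finset.sum_le_card_nsmul univ f _
    fun i _ => le_ciSup (Finite.bddAbove_range f) i

/-- Holds also for empty `ι`, where the division by `0` gives `0`. -/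
theorem Real.sum_add_div_card_le_iSup_add {ι : Type*} [Fintype ι] {α β : ι → ℝ} {c : ℝ}
    (hα : ∀ i, 0 ≤ α i) (hc : 0 ≤ c) (hβ : ∀ i, β i ≤ c) :
    (∑ i, (α i + β i)) / Fintype.card ι ≤ (⨆ i, α i) + c := by
  refine div_le_of_le_mul₀ (Nat.cast_nonneg _) (add_nonneg (Real.iSup_nonneg hα) hc) ?_
  have hβ_sum : ∑ i, β i ≤ Fintype.card ι * c := by
    simpa using Finset.sum_le_card_nsmul univ β c fun i _ => hβ i
  calc ∑ i, (α i + β i) = ∑ i, α i + ∑ i, β i := sum_add_distrib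
    _ ≤ Fintype.card ι * (⨆ i, α i) + Fintype.card ι * c :=
      add_le_add (Real.sum_le_card_mul_iSup α) hβ_sum
    _ = ((⨆ i, α i) + c) * Fintype.card ι := by ring

theorem mac_sdof_upper_bound_N_le_M_general
    (K : ℕ) (M N N_E : ℝ)
    (hNM : N ≤ M)
    (d α β : Fin K → ℝ)
    (hα : ∀ i, 0 ≤ α i)
    (h1 : (∑ i, d i) + (⨆ i, α i) ≤ N)
    (h2 : ∑ i, (α i + β i) = N_E)
    (h3 : ∀ i, β i ≤ M - N) :
    ∑ i, d i ≤ min (M - N_E / K) N := by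
  have hα_sup : 0 ≤ ⨆ i, α i := Real.iSup_nonneg hα
  have hNE_div : N_E / K ≤ (⨆ i, α i) + (M - N) := by
    simpa [h2] using Real.sum_add_div_card_le_iSup_add hα (sub_nonneg.mpr hNM) h3
  exact le_min (by linarith) (by linarith)

/-- Upper-bound LP for the K-user MAC, case `N ≤ M`:
`∑ d ≤ min (M − N_E/K) N`. -/
theorem mac_sdof_upper_bound_N_le_M
    (K : ℕ) (hK : 1 ≤ K) (M N N_E : ℝ)
    (hM : 0 ≤ M) (hN : 0 ≤ N) (hNE : 0 ≤ N_E) (hNM : N ≤ M)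
    (d α β : Fin K → ℝ)
    (hd : ∀ i, 0 ≤ d i) (hα : ∀ i, 0 ≤ α i) (hβ : ∀ i, 0 ≤ β i)
    (h1 : (∑ i, d i) + (⨆ i, α i) ≤ N)
    (h2 : ∑ i, (α i + β i) = N_E)
    (h3 : ∀ i, β i ≤ M - N) :
    ∑ i, d i ≤ min (M - N_E / K) N :=
  mac_sdof_upper_bound_N_le_M_general K M N N_E hNM d α β hα h1 h2 h3
end

section
/- Let n be a natural number and let B : Matrix (Fin n) (Fin n) ℝ be a positive-definite symmetric matrix. Then the function P ↦ Real.log (Matrix.det (1 + P • B)) / Real.log P tends to (n : ℝ) as P → ∞ (along Filter.atTop). -/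
open Filter Topology

/-!
Factoring out `P` gives `det (A + P • B) = P ^ n * det (P⁻¹ • A + B)`, so
`log det (A + P • B) / log P = n + log det (P⁻¹ • A + B) / log P`. The last determinant tends to
`det B ≠ 0`, hence its logarithm stays bounded and the quotient by `log P` vanishes.
-/

namespace Matrix

variable {ι : Type*} [Fintype ι] [DecidableEq ι]

theorem det_add_smul_eq_pow_mul_det_inv_smul_add {K : Type*} [Field K] (A B : Matrix ι ι K)
    {P : K} (hP : P ≠ 0) :
    det (A + P • B) = P ^ Fintype.card ι * det (P⁻¹ • A + B) := by
  rw [← det_smul, smul_add, smul_smul, mul_inv_cancel₀ hP, one_smul]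

theorem tendsto_det_inv_smul_add (A B : Matrix ι ι ℝ) :
    Tendsto (fun P : ℝ => det (P⁻¹ • A + B)) atTop (𝓝 B.det) := by
  have h : Tendsto (fun P : ℝ => P⁻¹ • A + B) atTop (𝓝 ((0 : ℝ) • A + B)) :=
    (tendsto_inv_atTop_zero.smul_const A).add tendsto_const_nhds
  rw [zero_smul, zero_add] at h
  exact (continuous_id.matrix_det.tendsto B).comp h

theorem tendsto_log_det_add_smul_div_log (A B : Matrix ι ι ℝ) (hB : B.det ≠ 0) :
    Tendsto (fun P : ℝ => Real.log (det (A + P • B)) / Real.log P) atTop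
      (𝓝 (Fintype.card ι : ℝ)) := by
  have hdet := tendsto_det_inv_smul_add A B
  have hvanish : Tendsto (fun P : ℝ => Real.log (det (P⁻¹ • A + B)) / Real.log P) atTop (𝓝 0) :=
    ((Real.continuousAt_log hB).tendsto.comp hdet).div_atTop Real.tendsto_log_atTop
  have hsplit : ∀ᶠ P : ℝ in atTop, Fintype.card ι + Real.log (det (P⁻¹ • A + B)) / Real.log P
      = Real.log (det (A + P • B)) / Real.log P := by
    filter_upwards [eventually_gt_atTop 1, hdet.eventually_ne hB] with P hP hdetP
    have hlogP : Real.log P ≠ 0 := (Real.log_pos hP).ne'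
    rw [det_add_smul_eq_pow_mul_det_inv_smul_add A B (by positivity),
      Real.log_mul (by positivity) hdetP, Real.log_pow, add_div, mul_div_cancel_right₀ _ hlogP]
  simpa using (hvanish.const_add (Fintype.card ι : ℝ)).congr' hsplit

end Matrix

theorem logdet_prelog_limit_general
    (n : ℕ) (B : Matrix (Fin n) (Fin n) ℝ)
    (hB : B.PosDef) :
    Tendsto
      (fun P : ℝ => Real.log (Matrix.det (1 + P • B)) / Real.log P)
      atTop (nhds (n : ℝ)) := by
  simpa using Matrix.tendsto_log_det_add_smul_div_log 1 B hB.det_pos.ne'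

/-- For a fixed positive-definite symmetric matrix `B`,
`log det (I + P • B) / log P → n` as `P → ∞`. -/
theorem logdet_prelog_limit
    (n : ℕ) (B : Matrix (Fin n) (Fin n) ℝ)
    (hB : B.PosDef) (hBsymm : B.IsSymm) :
    Tendsto
      (fun P : ℝ => Real.log (Matrix.det (1 + P • B)) / Real.log P)
      atTop (nhds (n : ℝ)) :=
  logdet_prelog_limit_general n B hB
end
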